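/- arXiv:1203.6085 — 4 statements merged into one kernel-verified Lean document; each statement's English description precedes it below -/
import Mathlib

section
/- Let ξ_1, ξ_2, … be a swap-invariant sequence of integrable random variables, and assume that either (a) ξ_k ≠ 0 almost surely for some k ≥ 1, or (b) the sequence (ξ_n) is uniformly integrable. Then the almost sure limit X of n^{-1}(ξ_1 + ⋯ + ξ_n) also holds in L^1, i.e. E|n^{-1}(ξ_1 + ⋯ + ξ_n) - X| → 0 as n → ∞. -/
open MeasureTheory ProbabilityTheory Filter

/-- A sequence of integrable random variables is *swap-invariant* if each of its
finite subvectors is zonoid equivalent to every coordinate permutation of itself. -/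
def SwapInvariant {Ω : Type*} [MeasureSpace Ω] (ξ : ℕ → Ω → ℝ) : Prop :=
  ∀ (n : ℕ) (k : Fin n → ℕ), StrictMono k →
    ∀ (σ : Equiv.Perm (Fin n)) (u : Fin n → ℝ),
      ∫ ω, |∑ i, u i * ξ (k i) ω| = ∫ ω, |∑ i, u i * ξ (k (σ i)) ω|

/-!
Under either hypothesis the sequence `(ξ n)` is uniformly integrable. Under (a) this comes from
swap-invariance: since `(|v| - |b|)⁺ = (|v + b| + |v - b|) / 2 - |b|`, the quantity
`E (|ξ i| - t |ξ k|)⁺` is a combination of first absolute moments of `ξ i ± t ξ k` and `ξ k`,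
so it does not depend on `i ≠ k`. As `ξ k ≠ 0` a.s. it tends to `0` as `t → ∞` for one (hence
every) `i`, so up to `ε` in `L¹` all `ξ i` are dominated by the single integrable `t |ξ k|`.
Averages of a uniformly integrable sequence are uniformly integrable, and Vitali's convergence
theorem upgrades the almost sure convergence to convergence in `L¹`.
-/

open Topology

theorem max_abs_sub_abs_zero_eq (v b : ℝ) :
    max (|v| - |b|) 0 = (|v + b| + |v - b|) / 2 - |b| := by
  rcases abs_cases (v + b) with ⟨h1, h1'⟩ | ⟨h1, h1'⟩ <;>
  rcases abs_cases (v - b) with ⟨h2, h2'⟩ | ⟨h2, h2'⟩ <;>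
  rcases abs_cases v with ⟨h3, h3'⟩ | ⟨h3, h3'⟩ <;>
  rcases abs_cases b with ⟨h4, h4'⟩ | ⟨h4, h4'⟩ <;>
  rcases max_cases (|v| - |b|) 0 with ⟨h5, h5'⟩ | ⟨h5, h5'⟩ <;> linarith

section Integrals

variable {α : Type*} [MeasurableSpace α] {μ : Measure α}

theorem integral_max_abs_sub_mul_abs_eq {f g : α → ℝ} (hf : Integrable f μ)
    (hg : Integrable g μ) {t : ℝ} (ht : 0 ≤ t) :
    ∫ x, max (|f x| - t * |g x|) 0 ∂μ
      = ((∫ x, |f x + t * g x| ∂μ) + ∫ x, |f x - t * g x| ∂μ) / 2 - t * ∫ x, |g x| ∂μ := by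
  have hpointwise (x : α) : max (|f x| - t * |g x|) 0
      = (|f x + t * g x| + |f x - t * g x|) / 2 - t * |g x| := by
    simpa only [abs_mul, abs_of_nonneg ht] using max_abs_sub_abs_zero_eq (f x) (t * g x)
  simp_rw [hpointwise]
  rw [integral_sub (by fun_prop) (by fun_prop), integral_div,
    integral_add (by fun_prop) (by fun_prop), integral_const_mul]

theorem tendsto_integral_max_sub_nat_mul_zero {f c : α → ℝ} (hf : Integrable f μ)
    (hc : AEMeasurable c μ) (hc_pos : ∀ᵐ x ∂μ, 0 < c x) :
    Tendsto (fun t : ℕ => ∫ x, max (f x - t * c x) 0 ∂μ) atTop (𝓝 0) := by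
  have hdom := tendsto_integral_of_dominated_convergence (μ := μ)
    (F := fun (t : ℕ) x => max (f x - t * c x) 0) (f := fun _ => 0) (fun x => |f x|)
    (fun t => by fun_prop) hf.abs ?_ ?_
  · simpa using hdom
  · intro t
    filter_upwards [hc_pos] with x hx
    have : 0 ≤ (t : ℝ) * c x := by positivity
    rw [Real.norm_of_nonneg (le_max_right _ _)]
    exact max_le (by linarith [le_abs_self (f x)]) (abs_nonneg _)
  · filter_upwards [hc_pos] with x hx
    have hlarge : ∀ᶠ t : ℕ in atTop, f x ≤ t * c x :=
      (tendsto_natCast_atTop_atTop.atTop_mul_const hx).eventually_ge_atTop (f x)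
    refine tendsto_const_nhds.congr' ?_
    filter_upwards [hlarge] with t ht
    exact (max_eq_right (by linarith)).symm

theorem exists_integral_max_sub_const_le {g : α → ℝ} (hg : Integrable g μ) {ε : ℝ}
    (hε : 0 < ε) : ∃ M : ℝ, ∫ x, max (g x - M) 0 ∂μ ≤ ε := by
  have htail := tendsto_integral_max_sub_nat_mul_zero hg (c := fun _ => 1) aemeasurable_const
    (ae_of_all _ fun _ => one_pos)
  obtain ⟨M, hM⟩ := (htail.eventually (ge_mem_nhds hε)).exists
  exact ⟨M, by simpa only [mul_one] using hM⟩

variable [IsFiniteMeasure μ] {ι : Type*} {f : ι → α → ℝ}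

theorem uniformIntegrable_of_forall_integral_max_abs_sub_const_le (hf : ∀ i, Integrable (f i) μ)
    (h : ∀ ε > 0, ∃ M : ℝ, ∀ i, ∫ x, max (|f i x| - M) 0 ∂μ ≤ ε) :
    UniformIntegrable f 1 μ := by
  refine uniformIntegrable_of le_rfl ENNReal.one_ne_top (fun i => (hf i).1) fun ε hε => ?_
  obtain ⟨M, hM⟩ := h (ε / 2) (half_pos hε)
  refine ⟨(2 * M).toNNReal, fun i => ?_⟩
  -- on `{2M ≤ |f i|}` we have `|f i| ≤ 2 (|f i| - M)`
  have hpointwise (x : α) :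
      ‖{x | (2 * M).toNNReal ≤ ‖f i x‖₊}.indicator (f i) x‖ ≤ 2 * max (|f i x| - M) 0 := by
    rw [Set.indicator_apply]
    split_ifs with hx
    · have : 2 * M ≤ |f i x| := by simpa [Real.toNNReal_le_iff_le_coe] using hx
      rw [Real.norm_eq_abs]
      linarith [le_max_left (|f i x| - M) 0]
    · rw [norm_zero]
      positivity
  have hint : Integrable (fun x => 2 * max (|f i x| - M) 0) μ := by fun_prop
  have hnonneg (x : α) : 0 ≤ 2 * max (|f i x| - M) 0 := by positivity
  calc eLpNorm ({x | (2 * M).toNNReal ≤ ‖f i x‖₊}.indicator (f i)) 1 μ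
      ≤ eLpNorm (fun x => 2 * max (|f i x| - M) 0) 1 μ := eLpNorm_mono_real hpointwise
    _ = ENNReal.ofReal (∫ x, 2 * max (|f i x| - M) 0 ∂μ) := by
      rw [eLpNorm_one_eq_lintegral_enorm,
        ofReal_integral_eq_lintegral_ofReal hint (ae_of_all _ hnonneg)]
      simp_rw [Real.enorm_of_nonneg (hnonneg _)]
    _ ≤ ENNReal.ofReal ε := by
      rw [integral_const_mul]
      exact ENNReal.ofReal_le_ofReal (by linarith [hM i])

theorem uniformIntegrable_of_forall_integral_max_abs_sub_le (hf : ∀ i, Integrable (f i) μ)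
    (h : ∀ ε > 0, ∃ g : α → ℝ, Integrable g μ ∧ ∀ i, ∫ x, max (|f i x| - g x) 0 ∂μ ≤ ε) :
    UniformIntegrable f 1 μ := by
  refine uniformIntegrable_of_forall_integral_max_abs_sub_const_le hf fun ε hε => ?_
  obtain ⟨g, hg, hfg⟩ := h (ε / 2) (half_pos hε)
  obtain ⟨M, hM⟩ := exists_integral_max_sub_const_le hg (half_pos hε)
  refine ⟨M, fun i => ?_⟩
  have hsplit (x : α) : max (|f i x| - M) 0 ≤ max (|f i x| - g x) 0 + max (g x - M) 0 :=
    max_le (by linarith [le_max_left (|f i x| - g x) 0, le_max_left (g x - M) 0])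
      (by positivity)
  calc ∫ x, max (|f i x| - M) 0 ∂μ
      ≤ ∫ x, (max (|f i x| - g x) 0 + max (g x - M) 0) ∂μ :=
        integral_mono (by fun_prop) (by fun_prop) hsplit
    _ = (∫ x, max (|f i x| - g x) 0 ∂μ) + ∫ x, max (g x - M) 0 ∂μ :=
        integral_add (by fun_prop) (by fun_prop)
    _ ≤ ε := by linarith [hfg i]

theorem tendsto_integral_abs_sub_of_uniformIntegrable {f : ℕ → α → ℝ} {g : α → ℝ}
    (hf : UniformIntegrable f 1 μ) (hg : Integrable g μ)
    (hfg : ∀ᵐ x ∂μ, Tendsto (fun n => f n x) atTop (𝓝 (g x))) :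
    Tendsto (fun n => ∫ x, |f n x - g x| ∂μ) atTop (𝓝 0) := by
  have hg₁ : MemLp g 1 μ := memLp_one_iff_integrable.2 hg
  have hLp := tendsto_Lp_finite_of_tendsto_ae le_rfl ENNReal.one_ne_top hf.1 hg₁
    hf.unifIntegrable hfg
  rw [← ENNReal.tendsto_toReal_zero_iff fun n => ((hf.memLp n).sub hg₁).eLpNorm_ne_top] at hLp
  convert hLp using 2 with n
  rw [toReal_eLpNorm ((hf.1 n).sub hg.1), lpNorm_one_eq_integral_norm ((hf.1 n).sub hg.1)]
  rfl

end Integrals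

namespace SwapInvariant

variable {Ω : Type*} [MeasureSpace Ω] {ξ : ℕ → Ω → ℝ}

theorem integral_abs_sum_perm_of_injective (hξ : SwapInvariant ξ) {n : ℕ} {k : Fin n → ℕ}
    (hk : Function.Injective k) (σ : Equiv.Perm (Fin n)) (u : Fin n → ℝ) :
    ∫ ω, |∑ i, u i * ξ (k i) ω| = ∫ ω, |∑ i, u i * ξ (k (σ i)) ω| := by
  set τ := Tuple.sort k
  have hsorted : StrictMono (k ∘ τ) :=
    (Tuple.monotone_sort k).strictMono_of_injective (hk.comp τ.injective)
  have key := hξ n (k ∘ τ) hsorted (τ⁻¹ * σ * τ) (u ∘ τ)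
  simp only [Function.comp_apply, Equiv.Perm.coe_mul, Equiv.Perm.coe_inv,
    Equiv.apply_symm_apply] at key
  convert key using 4 <;> exact (Equiv.sum_comp τ (M := ℝ) _).symm

theorem integral_abs_pair_eq (hξ : SwapInvariant ξ) {i j k : ℕ} (hik : i ≠ k) (hjk : j ≠ k)
    (a b : ℝ) : ∫ ω, |a * ξ i ω + b * ξ k ω| = ∫ ω, |a * ξ j ω + b * ξ k ω| := by
  rcases eq_or_ne i j with rfl | hij
  · rfl
  have hinj : Function.Injective ![i, j, k] := by
    intro x y hxy
    fin_cases x <;> fin_cases y <;> simp_all [eq_comm]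
  simpa [Fin.sum_univ_three, Equiv.swap_apply_def] using
    hξ.integral_abs_sum_perm_of_injective hinj (Equiv.swap 0 1) ![a, 0, b]

theorem integral_max_abs_sub_mul_abs_eq_of_ne (hξ : SwapInvariant ξ)
    (hint : ∀ n, Integrable (ξ n)) {i j k : ℕ} (hik : i ≠ k) (hjk : j ≠ k) {t : ℝ} (ht : 0 ≤ t) :
    ∫ ω, max (|ξ i ω| - t * |ξ k ω|) 0 = ∫ ω, max (|ξ j ω| - t * |ξ k ω|) 0 := by
  have hadd := hξ.integral_abs_pair_eq hik hjk 1 t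
  have hsub := hξ.integral_abs_pair_eq hik hjk 1 (-t)
  simp only [one_mul, neg_mul, ← sub_eq_add_neg] at hadd hsub
  rw [_root_.integral_max_abs_sub_mul_abs_eq (hint i) (hint k) ht,
    _root_.integral_max_abs_sub_mul_abs_eq (hint j) (hint k) ht, hadd, hsub]

theorem uniformIntegrable [IsFiniteMeasure (ℙ : Measure Ω)] (hξ : SwapInvariant ξ)
    (hint : ∀ n, Integrable (ξ n)) {k : ℕ} (hk : ∀ᵐ ω, ξ k ω ≠ 0) :
    UniformIntegrable ξ 1 ℙ := by
  refine uniformIntegrable_of_forall_integral_max_abs_sub_le hint fun ε hε => ?_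
  have htail := tendsto_integral_max_sub_nat_mul_zero (hint (k + 1)).abs
    (hint k).1.aemeasurable.abs (hk.mono fun ω hω => abs_pos.2 hω)
  obtain ⟨T, hT, hT_one⟩ :=
    ((htail.eventually (ge_mem_nhds hε)).and (eventually_ge_atTop 1)).exists
  refine ⟨fun ω => T * |ξ k ω|, (hint k).abs.const_mul _, fun i => ?_⟩
  rcases eq_or_ne i k with rfl | hik
  · have hT_one' : (1 : ℝ) ≤ T := by exact_mod_cast hT_one
    have hzero (ω : Ω) : max (|ξ i ω| - T * |ξ i ω|) 0 = 0 :=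
      max_eq_right (by nlinarith [abs_nonneg (ξ i ω)])
    simp only [hzero, integral_zero, hε.le]
  · rwa [hξ.integral_max_abs_sub_mul_abs_eq_of_ne hint hik (Nat.succ_ne_self k)
      (Nat.cast_nonneg T)]

end SwapInvariant

theorem swapInvariant_L1_convergence_general
    {Ω : Type*} [MeasureSpace Ω] [IsProbabilityMeasure (ℙ : Measure Ω)]
    (ξ : ℕ → Ω → ℝ) (hint : ∀ n, Integrable (ξ n))
    (hswap : SwapInvariant ξ)
    (X : Ω → ℝ) (hXint : Integrable X)
    (hX : ∀ᵐ ω, Tendsto (fun n : ℕ => (n : ℝ)⁻¹ * ∑ i ∈ Finset.range n, ξ i ω)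
      atTop (nhds (X ω)))
    (hcond : (∃ k, ∀ᵐ ω, ξ k ω ≠ 0) ∨ UniformIntegrable ξ 1 ℙ) :
    Tendsto (fun n : ℕ => ∫ ω, |(n : ℝ)⁻¹ * ∑ i ∈ Finset.range n, ξ i ω - X ω|)
      atTop (nhds 0) := by
  have hui : UniformIntegrable ξ 1 ℙ :=
    hcond.elim (fun ⟨_, hk⟩ => hswap.uniformIntegrable hint hk) id
  have havg :
      UniformIntegrable (fun (n : ℕ) ω => (n : ℝ)⁻¹ * ∑ i ∈ Finset.range n, ξ i ω) 1 ℙ := by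
    simpa only [Pi.smul_def, Finset.sum_apply, smul_eq_mul] using
      uniformIntegrable_average le_rfl hui
  exact tendsto_integral_abs_sub_of_uniformIntegrable havg hXint hX

/-- **Theorem 4.4 (L¹ convergence).** Let `ξ₁, ξ₂, …` be a swap-invariant sequence
of integrable random variables such that (a) `ξ_k ≠ 0` a.s. for some `k`, or
(b) the sequence is uniformly integrable. Then the a.s. convergence of
`n⁻¹(ξ₁+⋯+ξₙ)` to the integrable random variable `X` also holds in `L¹`. -/
theorem swapInvariant_L1_convergence
    {Ω : Type*} [MeasureSpace Ω] [IsProbabilityMeasure (ℙ : Measure Ω)]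
    (ξ : ℕ → Ω → ℝ) (hmeas : ∀ n, Measurable (ξ n)) (hint : ∀ n, Integrable (ξ n))
    (hswap : SwapInvariant ξ)
    (X : Ω → ℝ) (hXint : Integrable X)
    (hX : ∀ᵐ ω, Tendsto (fun n : ℕ => (n : ℝ)⁻¹ * ∑ i ∈ Finset.range n, ξ i ω)
      atTop (nhds (X ω)))
    (hcond : (∃ k, ∀ᵐ ω, ξ k ω ≠ 0) ∨ UniformIntegrable ξ 1 ℙ) :
    Tendsto (fun n : ℕ => ∫ ω, |(n : ℝ)⁻¹ * ∑ i ∈ Finset.range n, ξ i ω - X ω|)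
      atTop (nhds 0) :=
  swapInvariant_L1_convergence_general ξ hint hswap X hXint hX hcond
end

section
/- Let ξ = (ξ_1,…,ξ_d) be an integrable random vector, not identically zero, which is either jointly self-dual (i.e. E(u_0 + u_1ξ_1 + ⋯ + u_dξ_d)_+ is invariant under all permutations of (u_0, u_1, …, u_d)) or lift swap-invariant (i.e. E|u_0 + u_1ξ_1 + ⋯ + u_dξ_d| is invariant under all permutations of (u_0, u_1, …, u_d)) with Eξ_i = 1 for some i. Then every component ξ_j is almost surely strictly positive and Eξ_j = 1 for all j = 1,…,d. -/
/-!
Swapping the coefficients `u₀` and `u_j` of `u = (a, b e_j)` shows that `E f(a + b ξ_j)` is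
symmetric in `(a, b)`, and swapping `u_i` and `u_j` that it does not depend on `j`. For a real
`X`, symmetry of `E(a + bX)₊` gives `E X₊ = 1` and `E(-X)₊ = 0`, hence `E X = 1`; the choice
`(a, b) = (1, -n)` and Markov's inequality give `P(X ≤ 0) ≤ E(1 - nX)₊ = E(X - n)₊ → 0`.

For `f = |·|`, one has `E|ξ_j| = 1` and `E|1 + ξ_j| = E|1 + ξ_i| ≥ 1 + E ξ_i = 2`, so the triangle
inequality `|1 + ξ_j| ≤ 1 + |ξ_j|` is an a.s. equality, forcing `ξ_j ≥ 0` and `E ξ_j = 1`.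
Then `2 y₊ = |y| + y` turns symmetry of `E|a + b ξ_j|` into symmetry of `E(a + b ξ_j)₊`.
-/

open MeasureTheory ProbabilityTheory Filter Topology

section Coefficients

variable {d : ℕ}

/-- `liftPairing u x` is the pairing of `u` with the lift `(1, x)` of `x`. -/
def liftPairing (u : Fin (d + 1) → ℝ) (x : Fin d → ℝ) : ℝ :=
  u 0 + ∑ i : Fin d, u i.succ * x i

lemma liftPairing_cons_single (a b : ℝ) (j : Fin d) (x : Fin d → ℝ) :
    liftPairing (Fin.cons a (Pi.single j b)) x = a + b * x j := by
  simp [liftPairing, Pi.single_apply]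

lemma cons_single_comp_swap_zero (a b : ℝ) (j : Fin d) :
    (Fin.cons a (Pi.single j b) : Fin (d + 1) → ℝ) ∘ Equiv.swap 0 j.succ =
      Fin.cons b (Pi.single j a) := by
  funext k
  cases k using Fin.cases
  · simp
  · simp only [Function.comp_apply, Equiv.swap_apply_def, Fin.succ_ne_zero, Fin.succ_inj,
      Fin.cons_succ, Pi.single_apply]
    split_ifs <;> simp_all

lemma cons_single_comp_swap_succ (a b : ℝ) (i j : Fin d) :
    (Fin.cons a (Pi.single j b) : Fin (d + 1) → ℝ) ∘ Equiv.swap i.succ j.succ =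
      Fin.cons a (Pi.single i b) := by
  funext k
  cases k using Fin.cases
  · simp [Equiv.swap_apply_of_ne_of_ne (Fin.succ_ne_zero i).symm (Fin.succ_ne_zero j).symm]
  · simp only [Function.comp_apply, Equiv.swap_apply_def, Fin.succ_inj, Fin.cons_succ,
      Pi.single_apply]
    split_ifs <;> simp_all

end Coefficients

section PermInvariance

variable {Ω : Type*} [MeasurableSpace Ω] {μ : Measure Ω} {d : ℕ}

/-- For `f = (·)₊` this is joint self-duality, for `f = |·|` lift swap-invariance. -/
def LiftPermInvariant (f : ℝ → ℝ) (μ : Measure Ω) (ξ : Ω → Fin d → ℝ) : Prop :=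
  ∀ (u : Fin (d + 1) → ℝ) (σ : Equiv.Perm (Fin (d + 1))),
    ∫ ω, f (liftPairing u (ξ ω)) ∂μ = ∫ ω, f (liftPairing (u ∘ σ) (ξ ω)) ∂μ

namespace LiftPermInvariant

variable {f : ℝ → ℝ} {ξ : Ω → Fin d → ℝ}

lemma integral_swap_const (H : LiftPermInvariant f μ ξ) (j : Fin d) (a b : ℝ) :
    ∫ ω, f (a + b * ξ ω j) ∂μ = ∫ ω, f (b + a * ξ ω j) ∂μ := by
  simpa only [cons_single_comp_swap_zero, liftPairing_cons_single]
    using H (Fin.cons a (Pi.single j b)) (Equiv.swap 0 j.succ)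

lemma integral_swap_coord (H : LiftPermInvariant f μ ξ) (i j : Fin d) (a b : ℝ) :
    ∫ ω, f (a + b * ξ ω j) ∂μ = ∫ ω, f (a + b * ξ ω i) ∂μ := by
  simpa only [cons_single_comp_swap_succ, liftPairing_cons_single]
    using H (Fin.cons a (Pi.single j b)) (Equiv.swap i.succ j.succ)

end LiftPermInvariant

end PermInvariance

section OneDimensional

variable {Ω : Type*} [MeasurableSpace Ω] {μ : Measure Ω} {X : Ω → ℝ}

lemma tendsto_integral_max_sub_natCast_zero [IsFiniteMeasure μ] (hX : Integrable X μ) :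
    Tendsto (fun n : ℕ => ∫ ω, max (X ω - n) 0 ∂μ) atTop (𝓝 0) := by
  have hlim : ∀ ω, Tendsto (fun n : ℕ => max (X ω - n) 0) atTop (𝓝 0) := fun ω =>
    tendsto_const_nhds.congr' <| (tendsto_natCast_atTop_atTop.eventually_ge_atTop (X ω)).mono
      fun n hn => (max_eq_right (sub_nonpos.mpr hn)).symm
  simpa using tendsto_integral_of_dominated_convergence (fun ω => |X ω|)
    (fun n => (hX.sub (integrable_const (n : ℝ))).pos_part.aestronglyMeasurable) hX.abs
    (fun n => Eventually.of_forall fun ω => by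
      rw [Real.norm_of_nonneg (le_max_right _ _)]
      exact max_le ((sub_le_self _ n.cast_nonneg).trans (le_abs_self _)) (abs_nonneg _))
    (Eventually.of_forall hlim)

lemma measureReal_nonpos_le_integral_max_one_sub_mul [IsFiniteMeasure μ] (hX : Integrable X μ)
    {t : ℝ} (ht : 0 ≤ t) : μ.real {ω | X ω ≤ 0} ≤ ∫ ω, max (1 - t * X ω) 0 ∂μ := by
  have hsub : {ω | X ω ≤ 0} ⊆ {ω | 1 ≤ max (1 - t * X ω) 0} := fun ω (hω : X ω ≤ 0) =>
    show 1 ≤ max (1 - t * X ω) 0 from le_max_of_le_left (by nlinarith)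
  have hmarkov := mul_meas_ge_le_integral_of_nonneg (f := fun ω => max (1 - t * X ω) 0)
    (Eventually.of_forall fun ω => le_max_right _ _)
    ((integrable_const 1).sub (hX.const_mul t)).pos_part 1
  rw [one_mul] at hmarkov
  exact (measureReal_mono hsub).trans hmarkov

lemma ae_pos_of_integral_max_swap [IsFiniteMeasure μ] (hX : Integrable X μ)
    (h : ∀ a b : ℝ, ∫ ω, max (a + b * X ω) 0 ∂μ = ∫ ω, max (b + a * X ω) 0 ∂μ) :
    ∀ᵐ ω ∂μ, 0 < X ω := by
  have hbound : ∀ n : ℕ, μ.real {ω | X ω ≤ 0} ≤ ∫ ω, max (X ω - n) 0 ∂μ := fun n => by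
    have hn := h 1 (-n)
    simp only [neg_mul, ← sub_eq_add_neg, one_mul, neg_add_eq_sub] at hn
    exact hn ▸ measureReal_nonpos_le_integral_max_one_sub_mul hX n.cast_nonneg
  have hzero : μ.real {ω | X ω ≤ 0} = 0 :=
    (ge_of_tendsto' (tendsto_integral_max_sub_natCast_zero hX) hbound).antisymm measureReal_nonneg
  rw [measureReal_eq_zero_iff] at hzero
  simpa [ae_iff] using hzero

lemma integral_eq_one_of_integral_max_swap [IsProbabilityMeasure μ] (hX : Integrable X μ)
    (h : ∀ a b : ℝ, ∫ ω, max (a + b * X ω) 0 ∂μ = ∫ ω, max (b + a * X ω) 0 ∂μ) :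
    ∫ ω, X ω ∂μ = 1 := by
  have hpos : ∫ ω, max (X ω) 0 ∂μ = 1 := by simpa using h 0 1
  have hneg : ∫ ω, max (-X ω) 0 ∂μ = 0 := by simpa using (h (-1) 0).symm
  calc ∫ ω, X ω ∂μ = ∫ ω, (max (X ω) 0 - max (-X ω) 0) ∂μ := by
        simp only [max_zero_sub_max_neg_zero_eq_self]
    _ = ∫ ω, max (X ω) 0 ∂μ - ∫ ω, max (-X ω) 0 ∂μ := integral_sub hX.pos_part hX.neg.pos_part
    _ = 1 := by rw [hpos, hneg, sub_zero]

lemma two_mul_integral_max_zero {Y : Ω → ℝ} (hY : Integrable Y μ) :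
    2 * ∫ ω, max (Y ω) 0 ∂μ = ∫ ω, |Y ω| ∂μ + ∫ ω, Y ω ∂μ := by
  rw [← integral_const_mul, ← integral_add hY.abs hY]
  congr 1 with ω
  linarith [max_zero_add_max_neg_zero_eq_abs_self (Y ω), max_zero_sub_max_neg_zero_eq_self (Y ω)]

lemma integral_max_swap_of_integral_abs_swap [IsProbabilityMeasure μ] (hX : Integrable X μ)
    (h1 : ∫ ω, X ω ∂μ = 1)
    (h : ∀ a b : ℝ, ∫ ω, |a + b * X ω| ∂μ = ∫ ω, |b + a * X ω| ∂μ) (a b : ℝ) :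
    ∫ ω, max (a + b * X ω) 0 ∂μ = ∫ ω, max (b + a * X ω) 0 ∂μ := by
  have hmean : ∀ a b : ℝ, ∫ ω, (a + b * X ω) ∂μ = a + b := fun a b => by
    rw [integral_add (integrable_const a) (hX.const_mul b), integral_const_mul, h1]
    simp
  have key := two_mul_integral_max_zero (Y := fun ω => a + b * X ω)
    ((integrable_const a).add (hX.const_mul b))
  have key' := two_mul_integral_max_zero (Y := fun ω => b + a * X ω)
    ((integrable_const b).add (hX.const_mul a))
  rw [hmean] at key key'
  linarith [h a b]

lemma ae_nonneg_of_one_add_integral_abs_le [IsProbabilityMeasure μ] {Y : Ω → ℝ}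
    (hY : Integrable Y μ) (h : 1 + ∫ ω, |Y ω| ∂μ ≤ ∫ ω, |1 + Y ω| ∂μ) :
    ∀ᵐ ω ∂μ, 0 ≤ Y ω := by
  have htri : (fun ω => |1 + Y ω|) ≤ᵐ[μ] fun ω => 1 + |Y ω| :=
    Eventually.of_forall fun ω => (abs_add_le 1 (Y ω)).trans_eq (by rw [abs_one])
  have hint : Integrable (fun ω => 1 + |Y ω|) μ := (integrable_const 1).add hY.abs
  have heq : ∫ ω, |1 + Y ω| ∂μ = ∫ ω, 1 + |Y ω| ∂μ := by
    refine le_antisymm (integral_mono_ae ((integrable_const 1).add hY).abs hint htri) ?_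
    rwa [integral_add (integrable_const 1) hY.abs, integral_const, probReal_univ, one_smul]
  filter_upwards [(integral_eq_iff_of_ae_le ((integrable_const 1).add hY).abs hint htri).mp heq]
    with ω (hω : |1 + Y ω| = 1 + |Y ω|)
  rcases (abs_add_eq_add_abs_iff 1 (Y ω)).mp (by rwa [abs_one]) with ⟨-, hY⟩ | ⟨h10, -⟩
  · exact hY
  · linarith

end OneDimensional

namespace LiftPermInvariant

variable {Ω : Type*} [MeasurableSpace Ω] {μ : Measure Ω} [IsProbabilityMeasure μ] {d : ℕ}
  {ξ : Ω → Fin d → ℝ}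

lemma integral_eq_one_of_integral_eq_one (H : LiftPermInvariant (fun x => |x|) μ ξ)
    (hξ : ∀ j, Integrable (fun ω => ξ ω j) μ) {i : Fin d} (hi : ∫ ω, ξ ω i ∂μ = 1) (j : Fin d) :
    ∫ ω, ξ ω j ∂μ = 1 := by
  have habs : ∫ ω, |ξ ω j| ∂μ = 1 := by simpa using H.integral_swap_const j 0 1
  have hshift : 1 + ∫ ω, |ξ ω j| ∂μ ≤ ∫ ω, |1 + ξ ω j| ∂μ := by
    calc 1 + ∫ ω, |ξ ω j| ∂μ = ∫ ω, (1 + ξ ω i) ∂μ := by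
          rw [integral_add (integrable_const 1) (hξ i), hi, habs]; simp
      _ ≤ ∫ ω, |1 + ξ ω i| ∂μ :=
          integral_mono ((integrable_const 1).add (hξ i)) ((integrable_const 1).add (hξ i)).abs
            fun ω => le_abs_self _
      _ = ∫ ω, |1 + ξ ω j| ∂μ := by simpa using H.integral_swap_coord j i 1 1
  rw [← habs]
  refine integral_congr_ae ?_
  filter_upwards [ae_nonneg_of_one_add_integral_abs_le (hξ j) hshift] with ω hω
  exact (abs_of_nonneg hω).symm

end LiftPermInvariant

theorem selfDual_or_liftSwapInvariant_positive_general
    {d : ℕ} {Ω : Type*} [MeasureSpace Ω] [IsProbabilityMeasure (ℙ : Measure Ω)]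
    (ξ : Ω → Fin d → ℝ) (hξ : Integrable ξ)
    (h : (∀ (u : Fin (d + 1) → ℝ) (σ : Equiv.Perm (Fin (d + 1))),
            ∫ ω, max (u 0 + ∑ i : Fin d, u i.succ * ξ ω i) 0 =
              ∫ ω, max (u (σ 0) + ∑ i : Fin d, u (σ i.succ) * ξ ω i) 0) ∨
        ((∀ (u : Fin (d + 1) → ℝ) (σ : Equiv.Perm (Fin (d + 1))),
            ∫ ω, |u 0 + ∑ i : Fin d, u i.succ * ξ ω i| =
              ∫ ω, |u (σ 0) + ∑ i : Fin d, u (σ i.succ) * ξ ω i|) ∧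
          ∃ i : Fin d, ∫ ω, ξ ω i = 1)) :
    ∀ j : Fin d, (∀ᵐ ω, 0 < ξ ω j) ∧ ∫ ω, ξ ω j = 1 := by
  have hcoord : ∀ j, Integrable (fun ω => ξ ω j) := hξ.eval
  have hswap : ∀ j (a b : ℝ), ∫ ω, max (a + b * ξ ω j) 0 = ∫ ω, max (b + a * ξ ω j) 0 := by
    rcases h with hselfDual | ⟨hlift, i, hi⟩
    · exact LiftPermInvariant.integral_swap_const (f := fun x => max x 0) hselfDual
    · have hlift : LiftPermInvariant (fun x => |x|) ℙ ξ := hlift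
      exact fun j => integral_max_swap_of_integral_abs_swap (hcoord j)
        (hlift.integral_eq_one_of_integral_eq_one hcoord hi j) (hlift.integral_swap_const j)
  exact fun j => ⟨ae_pos_of_integral_max_swap (hcoord j) (hswap j),
    integral_eq_one_of_integral_max_swap (hcoord j) (hswap j)⟩

/-- **Proposition 5.2.** If a non-trivial integrable random vector `ξ` is either
jointly self-dual (invariance of `E(u₀ + u₁ξ₁ + ⋯ + u_dξ_d)₊` under all
permutations of `(u₀, …, u_d)`) or lift swap-invariant (same with `|·|` in place
of `(·)₊`) with `Eξ_i = 1` for some `i`, then all its components are almost surely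
strictly positive and have expectation one. -/
theorem selfDual_or_liftSwapInvariant_positive
    {d : ℕ} {Ω : Type*} [MeasureSpace Ω] [IsProbabilityMeasure (ℙ : Measure Ω)]
    (ξ : Ω → Fin d → ℝ) (hξm : Measurable ξ) (hξ : Integrable ξ)
    (hnz : ¬ ∀ᵐ ω, ξ ω = 0)
    (h : (∀ (u : Fin (d + 1) → ℝ) (σ : Equiv.Perm (Fin (d + 1))),
            ∫ ω, max (u 0 + ∑ i : Fin d, u i.succ * ξ ω i) 0 =
              ∫ ω, max (u (σ 0) + ∑ i : Fin d, u (σ i.succ) * ξ ω i) 0) ∨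
        ((∀ (u : Fin (d + 1) → ℝ) (σ : Equiv.Perm (Fin (d + 1))),
            ∫ ω, |u 0 + ∑ i : Fin d, u i.succ * ξ ω i| =
              ∫ ω, |u (σ 0) + ∑ i : Fin d, u (σ i.succ) * ξ ω i|) ∧
          ∃ i : Fin d, ∫ ω, ξ ω i = 1)) :
    ∀ j : Fin d, (∀ᵐ ω, 0 < ξ ω j) ∧ ∫ ω, ξ ω j = 1 :=
  selfDual_or_liftSwapInvariant_positive_general ξ hξ h
end

section
/- Let X be an integrable random variable whose essential infimum is -∞ and whose essential supremum is +∞. If μ, μ* ∈ R and σ, σ* > 0 are such that E(u(μ + σX) )_+ = E(u(μ* + σ*X))_+ for all u ∈ R (i.e. the random variables μ + σX and μ* + σ*X have the same zonoid), then μ = μ* and σ = σ*. In other words, within the location-scale family {μ + σX : μ ∈ R, σ > 0} generated by such an X, the zonoid uniquely determines the location and scale parameters. -/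
open MeasureTheory ProbabilityTheory

/-- **Theorem 6.1 (location-scale families).** Let `X` be an integrable random
variable with essential infimum `-∞` and essential supremum `+∞` (i.e. for every
`c`, both `{X > c}` and `{X < c}` have positive probability). If `μ + σX` and
`μ* + σ*X` (with `σ, σ* > 0`) have equal zonoids, i.e.
`E(u(μ + σX))₊ = E(u(μ* + σ*X))₊` for all `u ∈ ℝ`, then `μ = μ*` and `σ = σ*`. -/
theorem zonoid_determines_location_scale
    {Ω : Type*} [MeasureSpace Ω] [IsProbabilityMeasure (ℙ : Measure Ω)]
    (X : Ω → ℝ) (hXm : Measurable X) (hXint : Integrable X)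
    (hsup : ∀ c : ℝ, 0 < ℙ {ω | c < X ω})
    (hinf : ∀ c : ℝ, 0 < ℙ {ω | X ω < c})
    (μ μ' σ σ' : ℝ) (hσ : 0 < σ) (hσ' : 0 < σ')
    (h : ∀ u : ℝ,
      ∫ ω, max (u * (μ + σ * X ω)) 0 = ∫ ω, max (u * (μ' + σ' * X ω)) 0) :
    μ = μ' ∧ σ = σ' := by
  set a : ℝ := -μ / σ with ha
  set b : ℝ := -μ' / σ' with hb
  have hIp : ∀ t : ℝ, Integrable (fun ω => max (X ω - t) 0) (ℙ : Measure Ω) :=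
    fun t => (hXint.sub (integrable_const t)).pos_part
  have hIn : ∀ t : ℝ, Integrable (fun ω => max (t - X ω) 0) (ℙ : Measure Ω) :=
    fun t => ((integrable_const t).sub hXint).pos_part
  set F : ℝ → ℝ := fun t => ∫ ω, max (X ω - t) 0 with hF
  set G : ℝ → ℝ := fun t => ∫ ω, max (t - X ω) 0 with hG
  -- positivity of F and G
  have Fpos : ∀ t : ℝ, 0 < F t := by
    intro t
    refine (integral_pos_iff_support_of_nonneg (fun ω => le_max_right _ _) (hIp t)).2 ?_
    refine lt_of_lt_of_le (hsup t) (measure_mono ?_)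
    intro ω hω
    simp only [Set.mem_setOf_eq] at hω
    simp only [Function.mem_support]
    exact ne_of_gt (lt_max_of_lt_left (by linarith))
  have Gpos : ∀ t : ℝ, 0 < G t := by
    intro t
    refine (integral_pos_iff_support_of_nonneg (fun ω => le_max_right _ _) (hIn t)).2 ?_
    refine lt_of_lt_of_le (hinf t) (measure_mono ?_)
    intro ω hω
    simp only [Set.mem_setOf_eq] at hω
    simp only [Function.mem_support]
    exact ne_of_gt (lt_max_of_lt_left (by linarith))
  -- strict monotonicity
  have Fmono : ∀ s t : ℝ, s < t → F t < F s := by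
    intro s t hst
    have hdiff : 0 < ∫ ω, (max (X ω - s) 0 - max (X ω - t) 0) := by
      refine (integral_pos_iff_support_of_nonneg ?_ ((hIp s).sub (hIp t))).2 ?_
      · intro ω
        simp only [Pi.sub_apply, Pi.zero_apply, sub_nonneg]
        exact max_le_max (sub_le_sub_left hst.le (X ω)) le_rfl
      refine lt_of_lt_of_le (hsup t) (measure_mono ?_)
      intro ω hω
      simp only [Set.mem_setOf_eq] at hω
      simp only [Function.mem_support, Pi.sub_apply]
      have h1 : max (X ω - s) 0 = X ω - s := max_eq_left (by linarith)
      have h2 : max (X ω - t) 0 = X ω - t := max_eq_left (by linarith)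
      rw [h1, h2]
      intro hc
      have : s = t := by linarith
      linarith
    rw [integral_sub (hIp s) (hIp t)] at hdiff
    have hfs : F s - F t > 0 := hdiff
    linarith
  have Gmono : ∀ s t : ℝ, s < t → G s < G t := by
    intro s t hst
    have hdiff : 0 < ∫ ω, (max (t - X ω) 0 - max (s - X ω) 0) := by
      refine (integral_pos_iff_support_of_nonneg ?_ ((hIn t).sub (hIn s))).2 ?_
      · intro ω
        simp only [Pi.sub_apply, Pi.zero_apply, sub_nonneg]
        exact max_le_max (sub_le_sub_right hst.le (X ω)) le_rfl
      refine lt_of_lt_of_le (hinf s) (measure_mono ?_)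
      intro ω hω
      simp only [Set.mem_setOf_eq] at hω
      simp only [Function.mem_support, Pi.sub_apply]
      have h1 : max (t - X ω) 0 = t - X ω := max_eq_left (by linarith)
      have h2 : max (s - X ω) 0 = s - X ω := max_eq_left (by linarith)
      rw [h1, h2]
      intro hc
      have : s = t := by linarith
      linarith
    rw [integral_sub (hIn t) (hIn s)] at hdiff
    have hgs : G t - G s > 0 := hdiff
    linarith
  -- key identities from u = 1 and u = -1
  have rw1 : ∀ (ν τ : ℝ), 0 < τ → ∀ (ω : Ω),
      max ((1 : ℝ) * (ν + τ * X ω)) 0 = τ * max (X ω - (-ν / τ)) 0 := by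
    intro ν τ hτ ω
    rw [mul_max_of_nonneg _ _ hτ.le, mul_zero]
    congr 1
    field_simp
    ring
  have rw2 : ∀ (ν τ : ℝ), 0 < τ → ∀ (ω : Ω),
      max ((-1 : ℝ) * (ν + τ * X ω)) 0 = τ * max ((-ν / τ) - X ω) 0 := by
    intro ν τ hτ ω
    rw [mul_max_of_nonneg _ _ hτ.le, mul_zero]
    congr 1
    field_simp
    ring
  have e1 : σ * F a = σ' * F b := by
    have h1 := h 1
    calc σ * F a = ∫ ω, σ * max (X ω - a) 0 := (integral_const_mul _ _).symm
      _ = ∫ ω, max ((1 : ℝ) * (μ + σ * X ω)) 0 := by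
          refine integral_congr_ae (Filter.Eventually.of_forall fun ω => ?_)
          show σ * max (X ω - a) 0 = max ((1 : ℝ) * (μ + σ * X ω)) 0
          exact (rw1 μ σ hσ ω).symm
      _ = ∫ ω, max ((1 : ℝ) * (μ' + σ' * X ω)) 0 := h1
      _ = ∫ ω, σ' * max (X ω - b) 0 := by
          refine integral_congr_ae (Filter.Eventually.of_forall fun ω => ?_)
          show max ((1 : ℝ) * (μ' + σ' * X ω)) 0 = σ' * max (X ω - b) 0
          exact rw1 μ' σ' hσ' ω
      _ = σ' * F b := integral_const_mul _ _
  have e2 : σ * G a = σ' * G b := by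
    have h1 := h (-1)
    calc σ * G a = ∫ ω, σ * max (a - X ω) 0 := (integral_const_mul _ _).symm
      _ = ∫ ω, max ((-1 : ℝ) * (μ + σ * X ω)) 0 := by
          refine integral_congr_ae (Filter.Eventually.of_forall fun ω => ?_)
          show σ * max (a - X ω) 0 = max ((-1 : ℝ) * (μ + σ * X ω)) 0
          exact (rw2 μ σ hσ ω).symm
      _ = ∫ ω, max ((-1 : ℝ) * (μ' + σ' * X ω)) 0 := h1
      _ = ∫ ω, σ' * max (b - X ω) 0 := by
          refine integral_congr_ae (Filter.Eventually.of_forall fun ω => ?_)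
          show max ((-1 : ℝ) * (μ' + σ' * X ω)) 0 = σ' * max (b - X ω) 0
          exact rw2 μ' σ' hσ' ω
      _ = σ' * G b := integral_const_mul _ _
  have cross : F a * G b = F b * G a := by
    have hmm : (σ * σ') * (F a * G b) = (σ * σ') * (F b * G a) := by
      calc (σ * σ') * (F a * G b) = (σ * F a) * (σ' * G b) := by ring
        _ = (σ' * F b) * (σ * G a) := by rw [e1, ← e2]
        _ = (σ * σ') * (F b * G a) := by ring
    exact mul_left_cancel₀ (ne_of_gt (mul_pos hσ hσ')) hmm
  have hab : a = b := by
    rcases lt_trichotomy a b with hlt | heq | hgt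
    · have h1 : F b < F a := Fmono a b hlt
      have h2 : G a < G b := Gmono a b hlt
      nlinarith [Fpos a, Fpos b, Gpos a, Gpos b]
    · exact heq
    · have h1 : F a < F b := Fmono b a hgt
      have h2 : G b < G a := Gmono b a hgt
      nlinarith [Fpos a, Fpos b, Gpos a, Gpos b]
  have hσσ : σ = σ' := by
    rw [hab] at e1
    nlinarith [Fpos b]
  refine ⟨?_, hσσ⟩
  have hth : -μ / σ' = -μ' / σ' := by
    have hab' : -μ / σ = -μ' / σ' := hab
    rw [hσσ] at hab'
    exact hab'
  have hmul : -μ * σ' = -μ' * σ' :=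
    (div_eq_div_iff (ne_of_gt hσ') (ne_of_gt hσ')).1 hth
  have := mul_right_cancel₀ (ne_of_gt hσ') hmul
  linarith
end

section
/- Let U be uniformly distributed on the unit sphere in R^d, let A and A* be d×d real matrices, and let R and R* be positive integrable random variables independent of U. Then the elliptically distributed random vectors ξ = R·(AU) and ξ* = R*·(A*U) are zonoid equivalent if and only if (ER)² A Aᵀ = (ER*)² A*(A*)ᵀ. -/
/-!
For a rotation-invariant random unit vector `U`, a Householder reflection carries any `v` to
`‖v‖ eᵢ`, so `E|⟨v, U⟩| = c ‖v‖` with `c = E|Uᵢ| > 0`. Computing `E|⟨U, U'⟩|` for independent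
copies by Fubini in both orders shows that `c` does not depend on the law of `U`. By
independence, `E|⟨u, R A U⟩| = c E R ‖Aᵀu‖ = c √(uᵀ (E R)² A Aᵀ u)`, and a symmetric matrix is
determined by its quadratic form.
-/

open MeasureTheory ProbabilityTheory Matrix

namespace Matrix

variable {ι κ : Type*} [Fintype ι]

lemma dotProduct_self_nonneg {R : Type*} [Ring R] [LinearOrder R] [IsStrictOrderedRing R]
    (x : ι → R) : 0 ≤ x ⬝ᵥ x :=
  Finset.sum_nonneg fun i _ => mul_self_nonneg (x i)

lemma abs_dotProduct_le_sqrt_mul_sqrt (x y : ι → ℝ) :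
    |x ⬝ᵥ y| ≤ √(x ⬝ᵥ x) * √(y ⬝ᵥ y) := by
  rw [← Real.sqrt_mul (dotProduct_self_nonneg x)]
  exact Real.abs_le_sqrt <| by
    simpa [dotProduct, sq] using Finset.sum_mul_sq_le_sq_mul_sq .univ x y

lemma dotProduct_mul_transpose_mulVec [Fintype κ] (B : Matrix ι κ ℝ) (u : ι → ℝ) :
    u ⬝ᵥ (B * Bᵀ) *ᵥ u = (u ᵥ* B) ⬝ᵥ (u ᵥ* B) := by
  rw [← mulVec_mulVec, dotProduct_mulVec, mulVec_transpose]

section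

variable [DecidableEq ι]

/-- The reflection in the hyperplane orthogonal to `n`; it is `1` for `n = 0` since `2 / 0 = 0`. -/
noncomputable def householder (n : ι → ℝ) : Matrix ι ι ℝ := 1 - (2 / (n ⬝ᵥ n)) • vecMulVec n n

lemma householder_transpose (n : ι → ℝ) : (householder n)ᵀ = householder n := by
  simp [householder, transpose_vecMulVec]

lemma householder_mul_self (n : ι → ℝ) : householder n * householder n = 1 := by
  have hsq : vecMulVec n n * vecMulVec n n = (n ⬝ᵥ n) • vecMulVec n n := by
    rw [vecMulVec_mul_vecMulVec, vecMulVec_smul]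
  have hc : 2 / (n ⬝ᵥ n) * (2 / (n ⬝ᵥ n)) * (n ⬝ᵥ n) = 2 * (2 / (n ⬝ᵥ n)) := by
    by_cases hn : n ⬝ᵥ n = 0
    · simp [hn]
    · field_simp
  simp only [householder, sub_mul, mul_sub, one_mul, mul_one, smul_mul_smul, hsq, smul_smul, hc]
  module

lemma householder_sub_mulVec {v w : ι → ℝ} (h : v ⬝ᵥ v = w ⬝ᵥ w) :
    householder (v - w) *ᵥ v = w := by
  have hnn : (v - w) ⬝ᵥ (v - w) = 2 * ((v - w) ⬝ᵥ v) := by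
    simp only [sub_dotProduct, dotProduct_sub, dotProduct_comm w v, h]; ring
  by_cases hnv : (v - w) ⬝ᵥ v = 0
  · rw [hnv, mul_zero, dotProduct_self_eq_zero, sub_eq_zero] at hnn
    simp [householder, hnn]
  · have hc : 2 / ((v - w) ⬝ᵥ (v - w)) * ((v - w) ⬝ᵥ v) = 1 := by
      rw [hnn]; field_simp
    rw [householder, sub_mulVec, one_mulVec, smul_mulVec, vecMulVec_mulVec, op_smul_eq_smul,
      smul_smul, hc, one_smul, sub_sub_cancel]

lemma IsSymm.ext_iff_dotProduct_mulVec {M N : Matrix ι ι ℝ} (hM : M.IsSymm) (hN : N.IsSymm) :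
    M = N ↔ ∀ u, u ⬝ᵥ M *ᵥ u = u ⬝ᵥ N *ᵥ u := by
  refine ⟨fun h u => h ▸ rfl, fun h => ?_⟩
  have hQ (u : ι → ℝ) : u ⬝ᵥ (M - N) *ᵥ u = 0 := by
    rw [sub_mulVec, dotProduct_sub, h, sub_self]
  have hdiag (i : ι) : (M - N) i i = 0 := by simpa using hQ (Pi.single i 1)
  rw [← sub_eq_zero]
  ext i j
  have hpolar := hQ (Pi.single i 1 + Pi.single j 1)
  simp only [mulVec_add, dotProduct_add, add_dotProduct, single_dotProduct, mulVec_single_one,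
    one_mul, col_apply, hdiag] at hpolar
  linarith [(hM.sub hN).apply i j, zero_apply (α := ℝ) i j]

end

end Matrix

def IsOrthogonallyInvariant {Ω ι : Type*} [MeasurableSpace Ω] [Fintype ι] [DecidableEq ι]
    (U : Ω → ι → ℝ) (μ : Measure Ω) : Prop :=
  ∀ O : Matrix ι ι ℝ, O * Oᵀ = 1 → μ.map (fun ω => O *ᵥ U ω) = μ.map U

section

variable {Ω Ω' ι κ : Type*} [MeasurableSpace Ω] [MeasurableSpace Ω'] [Fintype ι]
  {μ : Measure Ω} {μ' : Measure Ω'} {U : Ω → ι → ℝ} {U' : Ω' → ι → ℝ}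

lemma integrable_dotProduct_of_ae_unit [IsFiniteMeasure μ] (hUm : Measurable U)
    (hUsph : ∀ᵐ ω ∂μ, U ω ⬝ᵥ U ω = 1) (v : ι → ℝ) : Integrable (fun ω => v ⬝ᵥ U ω) μ := by
  refine (integrable_const √(v ⬝ᵥ v)).mono' (by fun_prop) ?_
  filter_upwards [hUsph] with ω hω
  simpa [hω] using abs_dotProduct_le_sqrt_mul_sqrt v (U ω)

namespace IsOrthogonallyInvariant

variable [DecidableEq ι]

lemma integral_abs_dotProduct_congr (hU : IsOrthogonallyInvariant U μ) (hUm : Measurable U)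
    {v w : ι → ℝ} (h : v ⬝ᵥ v = w ⬝ᵥ w) :
    ∫ ω, |v ⬝ᵥ U ω| ∂μ = ∫ ω, |w ⬝ᵥ U ω| ∂μ := by
  set H := householder (w - v)
  have hH : H * Hᵀ = 1 := by rw [householder_transpose, householder_mul_self]
  have hf : Measurable fun x : ι → ℝ => |w ⬝ᵥ x| := by fun_prop
  calc ∫ ω, |v ⬝ᵥ U ω| ∂μ = ∫ ω, |w ⬝ᵥ H *ᵥ U ω| ∂μ := by
        simp_rw [dotProduct_mulVec, ← mulVec_transpose, H, householder_transpose,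
          householder_sub_mulVec h.symm]
    _ = ∫ x, |w ⬝ᵥ x| ∂(μ.map fun ω => H *ᵥ U ω) :=
        (integral_map (by fun_prop) hf.aestronglyMeasurable).symm
    _ = ∫ x, |w ⬝ᵥ x| ∂(μ.map U) := by rw [hU H hH]
    _ = ∫ ω, |w ⬝ᵥ U ω| ∂μ := integral_map hUm.aemeasurable hf.aestronglyMeasurable

lemma integral_abs_dotProduct (hU : IsOrthogonallyInvariant U μ) (hUm : Measurable U) (i : ι)
    (v : ι → ℝ) : ∫ ω, |v ⬝ᵥ U ω| ∂μ = √(v ⬝ᵥ v) * ∫ ω, |U ω i| ∂μ := by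
  have h : v ⬝ᵥ v = (√(v ⬝ᵥ v) • Pi.single i 1) ⬝ᵥ (√(v ⬝ᵥ v) • Pi.single i 1) := by
    simp [Real.mul_self_sqrt (dotProduct_self_nonneg v)]
  rw [hU.integral_abs_dotProduct_congr hUm h, ← integral_const_mul]
  simp [abs_mul, abs_of_nonneg (Real.sqrt_nonneg _)]

lemma integral_abs_apply_pos [IsProbabilityMeasure μ] (hU : IsOrthogonallyInvariant U μ)
    (hUm : Measurable U) (hUsph : ∀ᵐ ω ∂μ, U ω ⬝ᵥ U ω = 1) (i : ι) :
    0 < ∫ ω, |U ω i| ∂μ := by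
  refine (integral_nonneg fun _ => abs_nonneg _).lt_of_ne fun h0 => ?_
  have hzero (j : ι) : ∀ᵐ ω ∂μ, U ω j = 0 := by
    have hj : ∫ ω, |Pi.single j 1 ⬝ᵥ U ω| ∂μ = 0 := by
      rw [hU.integral_abs_dotProduct hUm i, ← h0, mul_zero]
    filter_upwards [(integral_eq_zero_iff_of_nonneg (fun _ => abs_nonneg _)
      (integrable_dotProduct_of_ae_unit hUm hUsph _).abs).1 hj] with ω hω
    simpa using hω
  obtain ⟨ω, hω, hω0⟩ := (hUsph.and (ae_all_iff.2 hzero)).exists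
  simp [show U ω = 0 from funext hω0] at hω

lemma integral_integral_abs_dotProduct [IsProbabilityMeasure μ]
    (hU' : IsOrthogonallyInvariant U' μ') (hU'm : Measurable U')
    (hUsph : ∀ᵐ ω ∂μ, U ω ⬝ᵥ U ω = 1) (i : ι) :
    ∫ ω, ∫ ω', |U ω ⬝ᵥ U' ω'| ∂μ' ∂μ = ∫ ω', |U' ω' i| ∂μ' := by
  rw [integral_congr_ae (g := fun _ => ∫ ω', |U' ω' i| ∂μ'), integral_const]
  · simp
  filter_upwards [hUsph] with ω hω
  rw [hU'.integral_abs_dotProduct hU'm i, hω, Real.sqrt_one, one_mul]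

lemma integral_abs_apply_eq [IsProbabilityMeasure μ] [IsProbabilityMeasure μ']
    (hU : IsOrthogonallyInvariant U μ) (hU' : IsOrthogonallyInvariant U' μ')
    (hUm : Measurable U) (hU'm : Measurable U')
    (hUsph : ∀ᵐ ω ∂μ, U ω ⬝ᵥ U ω = 1) (hU'sph : ∀ᵐ ω ∂μ', U' ω ⬝ᵥ U' ω = 1) (i : ι) :
    ∫ ω, |U ω i| ∂μ = ∫ ω', |U' ω' i| ∂μ' := by
  have hnorm : Integrable (fun ω => √(U ω ⬝ᵥ U ω)) μ :=
    (integrable_const 1).congr (hUsph.mono fun ω hω => by simp [hω])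
  have hnorm' : Integrable (fun ω' => √(U' ω' ⬝ᵥ U' ω')) μ' :=
    (integrable_const 1).congr (hU'sph.mono fun ω' hω' => by simp [hω'])
  have hint : Integrable (Function.uncurry fun ω ω' => |U ω ⬝ᵥ U' ω'|) (μ.prod μ') :=
    (hnorm.mul_prod hnorm').mono' (by fun_prop) <| .of_forall fun p => by
      simpa [Function.uncurry_def] using abs_dotProduct_le_sqrt_mul_sqrt (U p.1) (U' p.2)
  rw [← integral_integral_abs_dotProduct hU hUm hU'sph,
    ← integral_integral_abs_dotProduct hU' hU'm hUsph]
  simp_rw [dotProduct_comm (U' _)]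
  exact (integral_integral_swap hint).symm

lemma integral_abs_dotProduct_smul_mulVec [Fintype κ] (hU : IsOrthogonallyInvariant U μ)
    (hUm : Measurable U) {R : Ω → ℝ} (hR : 0 ≤ᵐ[μ] R) (hRm : AEStronglyMeasurable R μ)
    (hRU : IndepFun R U μ) (A : Matrix κ ι ℝ) (i : ι) (u : κ → ℝ) :
    ∫ ω, |u ⬝ᵥ (R ω • A *ᵥ U ω)| ∂μ =
      √(u ⬝ᵥ ((∫ ω, R ω ∂μ) ^ 2 • (A * Aᵀ)) *ᵥ u) * ∫ ω, |U ω i| ∂μ := by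
  have hf : Measurable fun x : ι → ℝ => |(u ᵥ* A) ⬝ᵥ x| := by fun_prop
  have hpt : (fun ω => |u ⬝ᵥ (R ω • A *ᵥ U ω)|) =ᵐ[μ] R * fun ω => |(u ᵥ* A) ⬝ᵥ U ω| := by
    filter_upwards [hR] with ω hω
    rw [dotProduct_smul, dotProduct_mulVec, smul_eq_mul, abs_mul, abs_of_nonneg hω]
    rfl
  have hind : IndepFun R (fun ω => |(u ᵥ* A) ⬝ᵥ U ω|) μ := hRU.comp measurable_id hf
  rw [integral_congr_ae hpt,
    hind.integral_mul_eq_mul_integral hRm (hf.comp hUm).aestronglyMeasurable,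
    hU.integral_abs_dotProduct hUm i, smul_mulVec, dotProduct_smul,
    dotProduct_mul_transpose_mulVec, smul_eq_mul, Real.sqrt_mul (sq_nonneg _),
    Real.sqrt_sq (integral_nonneg_of_ae hR), mul_assoc]

end IsOrthogonallyInvariant

end

theorem elliptical_zonoid_equiv_iff_general
    {d : ℕ} {Ω Ω' : Type*} [MeasureSpace Ω] [MeasureSpace Ω']
    [IsProbabilityMeasure (ℙ : Measure Ω)] [IsProbabilityMeasure (ℙ : Measure Ω')]
    (U : Ω → Fin d → ℝ) (U' : Ω' → Fin d → ℝ)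
    (hUm : Measurable U) (hU'm : Measurable U')
    (hUsph : ∀ᵐ ω, ∑ i, U ω i ^ 2 = 1) (hU'sph : ∀ᵐ ω, ∑ i, U' ω i ^ 2 = 1)
    (hUrot : ∀ O : Matrix (Fin d) (Fin d) ℝ, O * O.transpose = 1 →
      Measure.map (fun ω => O.mulVec (U ω)) ℙ = Measure.map U ℙ)
    (hU'rot : ∀ O : Matrix (Fin d) (Fin d) ℝ, O * O.transpose = 1 →
      Measure.map (fun ω => O.mulVec (U' ω)) ℙ = Measure.map U' ℙ)
    (R : Ω → ℝ) (R' : Ω' → ℝ)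
    (hRpos : ∀ᵐ ω, 0 < R ω) (hR'pos : ∀ᵐ ω, 0 < R' ω)
    (hRint : Integrable R) (hR'int : Integrable R')
    (hindep : IndepFun R U ℙ) (hindep' : IndepFun R' U' ℙ)
    (A A' : Matrix (Fin d) (Fin d) ℝ) :
    (∀ u : Fin d → ℝ,
        ∫ ω, |∑ i, u i * (R ω * A.mulVec (U ω) i)| =
          ∫ ω, |∑ i, u i * (R' ω * A'.mulVec (U' ω) i)|) ↔
      (∫ ω, R ω) ^ 2 • (A * A.transpose) =
        (∫ ω, R' ω) ^ 2 • (A' * A'.transpose) := by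
  rcases isEmpty_or_nonempty (Fin d) with hd | ⟨⟨i⟩⟩
  · exact iff_of_true (fun u => by simp) (Subsingleton.elim _ _)
  change (∀ u, ∫ ω, |u ⬝ᵥ (R ω • A *ᵥ U ω)| = ∫ ω, |u ⬝ᵥ (R' ω • A' *ᵥ U' ω)|) ↔ _
  have hUunit : ∀ᵐ ω, U ω ⬝ᵥ U ω = 1 := by simpa [dotProduct, sq] using hUsph
  have hU'unit : ∀ᵐ ω, U' ω ⬝ᵥ U' ω = 1 := by simpa [dotProduct, sq] using hU'sph
  have hUinv : IsOrthogonallyInvariant U ℙ := hUrot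
  have hU'inv : IsOrthogonallyInvariant U' ℙ := hU'rot
  have hc := hUinv.integral_abs_apply_pos hUm hUunit i
  have hξ := hUinv.integral_abs_dotProduct_smul_mulVec hUm
    (hRpos.mono fun _ => le_of_lt) hRint.1 hindep A i
  have hξ' := hU'inv.integral_abs_dotProduct_smul_mulVec hU'm
    (hR'pos.mono fun _ => le_of_lt) hR'int.1 hindep' A' i
  rw [← hUinv.integral_abs_apply_eq hU'inv hUm hU'm hUunit hU'unit] at hξ'
  have hQ (r : ℝ) (B : Matrix (Fin d) (Fin d) ℝ) (u : Fin d → ℝ) :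
      0 ≤ u ⬝ᵥ (r ^ 2 • (B * Bᵀ)) *ᵥ u := by
    rw [smul_mulVec, dotProduct_smul, dotProduct_mul_transpose_mulVec, smul_eq_mul]
    exact mul_nonneg (sq_nonneg r) (dotProduct_self_nonneg _)
  simp only [hξ, hξ', mul_left_inj' hc.ne']
  rw [((isSymm_mul_transpose_self A).smul _).ext_iff_dotProduct_mulVec
    ((isSymm_mul_transpose_self A').smul _)]
  exact forall_congr' fun u => Real.sqrt_inj (hQ _ A u) (hQ _ A' u)

/-- **Proposition 6.5 (elliptical distributions).** Let `U` (resp. `U'`) be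
uniformly distributed on the unit sphere of `ℝ^d` (characterised by `‖U‖ = 1` a.s.
and invariance of the law under all orthogonal matrices), let `R, R*` be positive
integrable random variables independent of `U, U'` respectively, and let `A, A*`
be `d×d` matrices. Then the elliptical vectors `ξ = R·(AU)` and `ξ* = R*·(A*U')`
are zonoid equivalent iff `(ER)² A Aᵀ = (ER*)² A*(A*)ᵀ`. -/
theorem elliptical_zonoid_equiv_iff
    {d : ℕ} {Ω Ω' : Type*} [MeasureSpace Ω] [MeasureSpace Ω']
    [IsProbabilityMeasure (ℙ : Measure Ω)] [IsProbabilityMeasure (ℙ : Measure Ω')]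
    (U : Ω → Fin d → ℝ) (U' : Ω' → Fin d → ℝ)
    (hUm : Measurable U) (hU'm : Measurable U')
    (hUsph : ∀ᵐ ω, ∑ i, U ω i ^ 2 = 1) (hU'sph : ∀ᵐ ω, ∑ i, U' ω i ^ 2 = 1)
    (hUrot : ∀ O : Matrix (Fin d) (Fin d) ℝ, O * O.transpose = 1 →
      Measure.map (fun ω => O.mulVec (U ω)) ℙ = Measure.map U ℙ)
    (hU'rot : ∀ O : Matrix (Fin d) (Fin d) ℝ, O * O.transpose = 1 →
      Measure.map (fun ω => O.mulVec (U' ω)) ℙ = Measure.map U' ℙ)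
    (R : Ω → ℝ) (R' : Ω' → ℝ) (hRm : Measurable R) (hR'm : Measurable R')
    (hRpos : ∀ᵐ ω, 0 < R ω) (hR'pos : ∀ᵐ ω, 0 < R' ω)
    (hRint : Integrable R) (hR'int : Integrable R')
    (hindep : IndepFun R U ℙ) (hindep' : IndepFun R' U' ℙ)
    (A A' : Matrix (Fin d) (Fin d) ℝ) :
    (∀ u : Fin d → ℝ,
        ∫ ω, |∑ i, u i * (R ω * A.mulVec (U ω) i)| =
          ∫ ω, |∑ i, u i * (R' ω * A'.mulVec (U' ω) i)|) ↔
      (∫ ω, R ω) ^ 2 • (A * A.transpose) =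
        (∫ ω, R' ω) ^ 2 • (A' * A'.transpose) :=
  elliptical_zonoid_equiv_iff_general U U' hUm hU'm hUsph hU'sph hUrot hU'rot R R' hRpos hR'pos
    hRint hR'int hindep hindep' A A'
end
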